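/- Let L be a finite set of n lines in ℝ^d, let P ⊆ ℝ^d be a set of k points, let P̂ ⊆ ℝ^d be a finite set with cost(L, P̂) ≤ α · cost(L, P) for some α > 0 (where cost(L, Q) = Σ_{ℓ ∈ L} D(ℓ, Q)). For each ℓ ∈ L let ℓ' be the line parallel to ℓ passing through a closest point of P̂ to ℓ, and let L' = {ℓ' : ℓ ∈ L}. Then cost(L', P) ≤ (α + 1) · cost(L, P). -/

import Mathlib

/-!
Translating `ℓ` to the parallel line `ℓ'` through `c` moves every point of `ℓ` by at most
`D(ℓ, c)`, so `D(ℓ', p) ≤ D(ℓ, p) + D(ℓ, c)` for every point `p`. Taking `p` closest to `ℓ` in `P`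
and `c` closest to `ℓ` in `P̂` gives `D(ℓ', P) ≤ D(ℓ, P) + D(ℓ, P̂)`; summing over the lines and
using `cost(L, P̂) ≤ α · cost(L, P)` finishes the proof.
-/

open Metric

def lineThrough {d : ℕ} (a u : EuclideanSpace ℝ (Fin d)) : Set (EuclideanSpace ℝ (Fin d)) :=
  {x | ∃ t : ℝ, x = a + t • u}

/-- Distance from a line (as a set) to a finite set of points: the infimum over the
points of the set of the distance from the point to the line. -/
noncomputable def DLP {d : ℕ} (ℓ : Set (EuclideanSpace ℝ (Fin d)))
    (P : Finset (EuclideanSpace ℝ (Fin d))) : ℝ :=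
  sInf ((fun p => Metric.infDist p ℓ) '' (P : Set (EuclideanSpace ℝ (Fin d))))

section Lines

variable {d : ℕ}

lemma lineThrough_nonempty (a u : EuclideanSpace ℝ (Fin d)) : (lineThrough a u).Nonempty :=
  ⟨a, 0, by simp⟩

variable {a u c : EuclideanSpace ℝ (Fin d)}

lemma add_sub_mem_lineThrough {x y : EuclideanSpace ℝ (Fin d)} (hx : x ∈ lineThrough a u)
    (hy : y ∈ lineThrough a u) : c + (x - y) ∈ lineThrough c u := by
  obtain ⟨t, rfl⟩ := hx
  obtain ⟨s, rfl⟩ := hy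
  exact ⟨t - s, by module⟩

lemma infDist_lineThrough_le_add (p : EuclideanSpace ℝ (Fin d)) :
    infDist p (lineThrough c u) ≤ infDist p (lineThrough a u) + infDist c (lineThrough a u) := by
  have hdist : ∀ x ∈ lineThrough a u, ∀ y ∈ lineThrough a u,
      infDist p (lineThrough c u) ≤ dist p x + dist c y := fun x hx y hy =>
    calc infDist p (lineThrough c u) ≤ dist p (c + (x - y)) :=
          infDist_le_dist_of_mem (add_sub_mem_lineThrough hx hy)
      _ = ‖(p - x) - (c - y)‖ := by rw [dist_eq_norm]; congr 1; abel
      _ ≤ dist p x + dist c y := by rw [dist_eq_norm, dist_eq_norm]; exact norm_sub_le _ _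
  have hne := lineThrough_nonempty a u
  have hinf_x : ∀ y ∈ lineThrough a u, infDist p (lineThrough c u) - dist c y ≤
      infDist p (lineThrough a u) := fun y hy =>
    (le_infDist hne).2 fun x hx => by linarith [hdist x hx y hy]
  have : infDist p (lineThrough c u) - infDist p (lineThrough a u) ≤ infDist c (lineThrough a u) :=
    (le_infDist hne).2 fun y hy => by linarith [hinf_x y hy]
  linarith

end Lines

section DLP

variable {d : ℕ} {ℓ : Set (EuclideanSpace ℝ (Fin d))} {P : Finset (EuclideanSpace ℝ (Fin d))}

lemma DLP_empty (ℓ : Set (EuclideanSpace ℝ (Fin d))) : DLP ℓ ∅ = 0 := by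
  simp [DLP]

lemma DLP_le_infDist {p : EuclideanSpace ℝ (Fin d)} (hp : p ∈ P) : DLP ℓ P ≤ infDist p ℓ :=
  csInf_le (P.finite_toSet.image _).bddBelow ⟨p, hp, rfl⟩

lemma le_DLP {r : ℝ} (hP : P.Nonempty) (h : ∀ p ∈ P, r ≤ infDist p ℓ) : r ≤ DLP ℓ P :=
  le_csInf (hP.to_set.image _) (by rintro _ ⟨p, hp, rfl⟩; exact h p hp)

lemma exists_mem_DLP_eq (hP : P.Nonempty) : ∃ p ∈ P, DLP ℓ P = infDist p ℓ := by
  obtain ⟨p, hp, hpeq⟩ := (hP.to_set.image fun p => infDist p ℓ).csInf_mem (P.finite_toSet.image _)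
  exact ⟨p, hp, hpeq.symm⟩

lemma DLP_lineThrough_le_add (P : Finset (EuclideanSpace ℝ (Fin d))) :
    DLP (lineThrough c u) P ≤ DLP (lineThrough a u) P + infDist c (lineThrough a u) := by
  rcases P.eq_empty_or_nonempty with rfl | hP
  · simpa [DLP_empty] using infDist_nonneg
  obtain ⟨p, hp, hpeq⟩ := exists_mem_DLP_eq (ℓ := lineThrough a u) hP
  rw [hpeq]
  exact (DLP_le_infDist hp).trans (infDist_lineThrough_le_add p)

end DLP

theorem stmt5_general {d n : ℕ}
    (aa u c : Fin n → EuclideanSpace ℝ (Fin d))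
    (Phat P : Finset (EuclideanSpace ℝ (Fin d))) (hPhat : Phat.Nonempty)
    (hclosest : ∀ i, ∀ q ∈ Phat,
      Metric.infDist (c i) (lineThrough (aa i) (u i)) ≤ Metric.infDist q (lineThrough (aa i) (u i)))
    (α : ℝ)
    (happrox : (∑ i, DLP (lineThrough (aa i) (u i)) Phat) ≤ α * ∑ i, DLP (lineThrough (aa i) (u i)) P) :
    (∑ i, DLP (lineThrough (c i) (u i)) P) ≤ (α + 1) * ∑ i, DLP (lineThrough (aa i) (u i)) P := by
  have hterm : ∀ i, DLP (lineThrough (c i) (u i)) P ≤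
      DLP (lineThrough (aa i) (u i)) P + DLP (lineThrough (aa i) (u i)) Phat := fun i =>
    (DLP_lineThrough_le_add P).trans (by gcongr; exact le_DLP hPhat (hclosest i))
  calc (∑ i, DLP (lineThrough (c i) (u i)) P)
      ≤ ∑ i, (DLP (lineThrough (aa i) (u i)) P + DLP (lineThrough (aa i) (u i)) Phat) :=
        Finset.sum_le_sum fun i _ => hterm i
    _ = (∑ i, DLP (lineThrough (aa i) (u i)) P) + ∑ i, DLP (lineThrough (aa i) (u i)) Phat :=
        Finset.sum_add_distrib
    _ ≤ (α + 1) * ∑ i, DLP (lineThrough (aa i) (u i)) P := by linarith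

theorem stmt5 {d n k : ℕ} (hk : 1 ≤ k)
    (aa u c : Fin n → EuclideanSpace ℝ (Fin d)) (hu : ∀ i, u i ≠ 0)
    (Phat P : Finset (EuclideanSpace ℝ (Fin d))) (hPhat : Phat.Nonempty) (hPcard : P.card = k)
    (hc : ∀ i, c i ∈ Phat)
    (hclosest : ∀ i, ∀ q ∈ Phat,
      Metric.infDist (c i) (lineThrough (aa i) (u i)) ≤ Metric.infDist q (lineThrough (aa i) (u i)))
    (α : ℝ) (hα : 0 < α)
    (happrox : (∑ i, DLP (lineThrough (aa i) (u i)) Phat) ≤ α * ∑ i, DLP (lineThrough (aa i) (u i)) P) :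
    (∑ i, DLP (lineThrough (c i) (u i)) P) ≤ (α + 1) * ∑ i, DLP (lineThrough (aa i) (u i)) P :=
  stmt5_general aa u c Phat P hPhat hclosest α happrox
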